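/- arXiv:0806.2610 — 3 statements merged into one kernel-verified Lean document; each statement's English description precedes it below -/
import Mathlib

section
/- Let g be a metric on an open set U ⊆ ℝⁿ and let Γ be a connection on U such that both Γ and its symmetric part (1/2)(Γ^α_{μν} + Γ^α_{νμ}) are metric connections for g (i.e. both annihilate g in the sense D_α g_{ρω} = 0). Then the fully lowered Cartan tensor F_{ωρα} = g_{ωκ} F^κ_{ρα} is completely antisymmetric in all three indices, and Γ decomposes as Γ^α_{μν} = Λ^α_{μν} + (1/2) F^α_{μν}, where Λ is the Levi-Civita connection of g. -/
open Matrix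

/-- The partial derivative of `f : ℝⁿ → ℝ` in the `μ`-th coordinate direction. -/
noncomputable def pd {n : ℕ} (μ : Fin n) (f : (Fin n → ℝ) → ℝ) (x : Fin n → ℝ) : ℝ :=
  fderiv ℝ f x (Pi.single μ 1)

/-- The Levi-Civita connection `Λ^η_{αβ}` of a metric `g`. -/
noncomputable def levi {n : ℕ} (g : (Fin n → ℝ) → Matrix (Fin n) (Fin n) ℝ)
    (x : Fin n → ℝ) (η α β : Fin n) : ℝ :=
  (1 / 2) * ∑ μ, (g x)⁻¹ η μ *
    (pd β (fun y => g y α μ) x + pd α (fun y => g y μ β) x - pd μ (fun y => g y α β) x)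

/-- if both a connection `Γ` and its symmetric part are metric connections
for `g`, then the fully lowered Cartan tensor `F_{ωρα} = g_{ωκ}(Γ^κ_{ρα} − Γ^κ_{αρ})`
is completely antisymmetric, and `Γ^α_{μν} = Λ^α_{μν} + (1/2)(Γ^α_{μν} − Γ^α_{νμ})`
with `Λ` the Levi-Civita connection of `g`. -/
theorem cartan_completely_antisymmetric_and_connection_decomposition
    (n : ℕ) (U : Set (Fin n → ℝ)) (hU : IsOpen U)
    (g : (Fin n → ℝ) → Matrix (Fin n) (Fin n) ℝ)
    (hg : ∀ μ ν : Fin n, ContDiffOn ℝ (⊤ : ℕ∞) (fun x => g x μ ν) U)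
    (hgsym : ∀ x ∈ U, (g x)ᵀ = g x)
    (hginv : ∀ x ∈ U, IsUnit (g x).det)
    (Γ : (Fin n → ℝ) → Fin n → Fin n → Fin n → ℝ)
    (hmetric : ∀ x ∈ U, ∀ α ρ ω : Fin n,
      pd α (fun y => g y ρ ω) x
        - ∑ κ, g x κ ω * Γ x κ ρ α - ∑ κ, g x ρ κ * Γ x κ ω α = 0)
    (hmetricSym : ∀ x ∈ U, ∀ α ρ ω : Fin n,
      pd α (fun y => g y ρ ω) x
        - ∑ κ, g x κ ω * ((1 / 2) * (Γ x κ ρ α + Γ x κ α ρ))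
        - ∑ κ, g x ρ κ * ((1 / 2) * (Γ x κ ω α + Γ x κ α ω)) = 0) :
    (∀ x ∈ U, ∀ ω ρ α : Fin n,
      (∑ κ, g x ω κ * (Γ x κ ρ α - Γ x κ α ρ))
          = -∑ κ, g x ρ κ * (Γ x κ ω α - Γ x κ α ω) ∧
      (∑ κ, g x ω κ * (Γ x κ ρ α - Γ x κ α ρ))
          = -∑ κ, g x ω κ * (Γ x κ α ρ - Γ x κ ρ α) ∧
      (∑ κ, g x ω κ * (Γ x κ ρ α - Γ x κ α ρ))
          = -∑ κ, g x α κ * (Γ x κ ρ ω - Γ x κ ω ρ)) ∧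
    (∀ x ∈ U, ∀ α μ ν : Fin n,
      Γ x α μ ν = levi g x α μ ν + (1 / 2) * (Γ x α μ ν - Γ x α ν μ)) := by
  -- symmetry of g, pointwise
  have hsymm : ∀ x ∈ U, ∀ a b : Fin n, g x a b = g x b a := by
    intro x hx a b
    have := congrFun (congrFun (hgsym x hx) a) b
    simpa [Matrix.transpose_apply] using this.symm
  -- antisymmetry of lowered Cartan tensor in first two indices
  have hA : ∀ x ∈ U, ∀ α ρ ω : Fin n,
      (∑ κ, g x ω κ * (Γ x κ ρ α - Γ x κ α ρ))
        + (∑ κ, g x ρ κ * (Γ x κ ω α - Γ x κ α ω)) = 0 := by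
    intro x hx α ρ ω
    have h1 := hmetric x hx α ρ ω
    have h2 := hmetricSym x hx α ρ ω
    have key : (∑ κ, g x ω κ * (Γ x κ ρ α - Γ x κ α ρ))
        + (∑ κ, g x ρ κ * (Γ x κ ω α - Γ x κ α ω))
        = 2 * ((∑ κ, g x κ ω * Γ x κ ρ α) + (∑ κ, g x ρ κ * Γ x κ ω α))
          - 2 * ((∑ κ, g x κ ω * ((1 / 2) * (Γ x κ ρ α + Γ x κ α ρ)))
            + (∑ κ, g x ρ κ * ((1 / 2) * (Γ x κ ω α + Γ x κ α ω)))) := by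
      simp only [Finset.mul_sum, ← Finset.sum_add_distrib, ← Finset.sum_sub_distrib]
      refine Finset.sum_congr rfl fun κ _ => ?_
      rw [hsymm x hx κ ω]; ring
    rw [key]; linarith
  -- antisymmetry in last two indices (trivial)
  have hB : ∀ (x : Fin n → ℝ), ∀ a b c : Fin n,
      (∑ κ, g x a κ * (Γ x κ b c - Γ x κ c b))
        = -∑ κ, g x a κ * (Γ x κ c b - Γ x κ b c) := by
    intro x a b c
    rw [← Finset.sum_neg_distrib]
    exact Finset.sum_congr rfl fun κ _ => by ring
  -- distribution helper
  have hd : ∀ (x : Fin n → ℝ), ∀ a b c : Fin n,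
      (∑ κ, g x a κ * Γ x κ b c) - (∑ κ, g x a κ * Γ x κ c b)
        = ∑ κ, g x a κ * (Γ x κ b c - Γ x κ c b) := by
    intro x a b c
    rw [← Finset.sum_sub_distrib]
    exact Finset.sum_congr rfl fun κ _ => (mul_sub _ _ _).symm
  constructor
  · intro x hx ω ρ α
    refine ⟨by have := hA x hx α ρ ω; linarith, hB x ω ρ α, ?_⟩
    have e1 := hB x ω ρ α        -- L ω ρ α = −L ω α ρ
    have e2 := hA x hx ρ α ω     -- L ω α ρ + L α ω ρ = 0
    have e3 := hB x α ω ρ        -- L α ω ρ = −L α ρ ω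
    linarith
  · intro x hx α μ ν
    have hm : ∀ a r w : Fin n, pd a (fun y => g y r w) x
        = (∑ κ, g x w κ * Γ x κ r a) + ∑ κ, g x r κ * Γ x κ w a := by
      intro a r w
      have h1 := hmetric x hx a r w
      have h2 : ∑ κ, g x κ w * Γ x κ r a = ∑ κ, g x w κ * Γ x κ r a :=
        Finset.sum_congr rfl fun κ _ => by rw [hsymm x hx κ w]
      linarith
    have hlevi : levi g x α μ ν = (1 / 2) * (Γ x α μ ν + Γ x α ν μ) := by
      have hinner : ∀ lam : Fin n,
          pd ν (fun y => g y μ lam) x + pd μ (fun y => g y lam ν) x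
            - pd lam (fun y => g y μ ν) x
          = ∑ κ, g x lam κ * (Γ x κ μ ν + Γ x κ ν μ) := by
        intro lam
        rw [hm ν μ lam, hm μ lam ν, hm lam μ ν]
        have d1 := hd x μ lam ν
        have d2 := hd x ν lam μ
        have c1 := hA x hx ν lam μ   -- L μ lam ν + L lam μ ν = 0
        have c2 := hA x hx μ lam ν   -- L ν lam μ + L lam ν μ = 0
        have c3 := hB x lam μ ν      -- L lam μ ν = −L lam ν μ
        have s : ∑ κ, g x lam κ * (Γ x κ μ ν + Γ x κ ν μ)
            = (∑ κ, g x lam κ * Γ x κ μ ν) + ∑ κ, g x lam κ * Γ x κ ν μ := by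
          rw [← Finset.sum_add_distrib]
          exact Finset.sum_congr rfl fun κ _ => mul_add _ _ _
        linarith
      unfold levi
      have hsum : ∑ lam, (g x)⁻¹ α lam *
          (pd ν (fun y => g y μ lam) x + pd μ (fun y => g y lam ν) x
            - pd lam (fun y => g y μ ν) x)
          = Γ x α μ ν + Γ x α ν μ := by
        have step1 : ∑ lam, (g x)⁻¹ α lam *
            (pd ν (fun y => g y μ lam) x + pd μ (fun y => g y lam ν) x
              - pd lam (fun y => g y μ ν) x)
            = ∑ κ, ((g x)⁻¹ * g x) α κ * (Γ x κ μ ν + Γ x κ ν μ) := by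
          simp only [hinner, Finset.mul_sum]
          rw [Finset.sum_comm]
          refine Finset.sum_congr rfl fun κ _ => ?_
          rw [Matrix.mul_apply, Finset.sum_mul]
          exact Finset.sum_congr rfl fun lam _ => by ring
        rw [step1, Matrix.nonsing_inv_mul _ (hginv x hx)]
        simp [Matrix.one_apply, ite_mul, Finset.sum_ite_eq]
      rw [hsum]
    rw [hlevi]; ring
end

section
/- Let g be a metric on an open set U ⊆ ℝⁿ with Levi-Civita connection Λ, and let F_{αμν} : U → ℝ be smooth and completely antisymmetric in all three indices. Define the connection Γ^α_{μν} = Λ^α_{μν} + (1/2) g^{ακ} F_{κμν}. Then the Ricci scalar of Γ, namely F = g^{ji} F^a{}_{jai} where F^a{}_{jki} is the Riemann tensor of Γ, satisfies F = R − (1/4) F_{abc} F^{abc}, where R is the scalar curvature of g and the indices of F are raised with g^{··}. -/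
open Matrix

/-- The Riemann tensor `F^a{}_{jki}` of a connection `Γ`. -/
noncomputable def riem {n : ℕ} (Γ : (Fin n → ℝ) → Fin n → Fin n → Fin n → ℝ)
    (x : Fin n → ℝ) (a j k i : Fin n) : ℝ :=
  pd k (fun y => Γ y a j i) x - pd i (fun y => Γ y a j k) x
    + ∑ r, (Γ x a r k * Γ x r j i - Γ x a r i * Γ x r j k)

/-- The Ricci scalar of a connection `Γ` with respect to the metric `g`:
`g^{ji} F^a{}_{jai}`. -/
noncomputable def ricciScalar {n : ℕ} (g : (Fin n → ℝ) → Matrix (Fin n) (Fin n) ℝ)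
    (Γ : (Fin n → ℝ) → Fin n → Fin n → Fin n → ℝ) (x : Fin n → ℝ) : ℝ :=
  ∑ j, ∑ i, (g x)⁻¹ j i * ∑ a, riem Γ x a j a i

/-! Write the connection as `Λ + K` with the contorsion `K^a_{μν} = ½ g^{aκ} F_{κμν}`, which is
antisymmetric in its lower indices and, by total antisymmetry of `F`, traceless. The Riemann
tensor of `Λ + K` is that of `Λ`, plus that of `K`, plus terms bilinear in `Λ` and `K`. After
contraction with the symmetric `g^{ji}` the bilinear terms cancel because `Λ` is symmetric in
its lower indices, and in the Ricci scalar of `K` the derivative terms vanish for the same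
reasons, leaving `-g^{ji} K^a_{ri} K^r_{ja} = -¼ F_{abc} F^{abc}`. -/

open Finset Filter Topology

theorem sum_six_reorder {ι M : Type*} [Fintype ι] [AddCommMonoid M]
    (f : ι → ι → ι → ι → ι → ι → M) :
    ∑ a, ∑ b, ∑ c, ∑ d, ∑ e, ∑ h, f a b c d e h
      = ∑ h, ∑ c, ∑ d, ∑ b, ∑ e, ∑ a, f a b c d e h := by
  simp only [← Fintype.sum_prod_type']
  exact Fintype.sum_equiv
    ⟨fun ⟨a, b, c, d, e, h⟩ => (h, c, d, b, e, a), fun ⟨h, c, d, b, e, a⟩ => (a, b, c, d, e, h),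
      fun _ => rfl, fun _ => rfl⟩ _ _ fun _ => rfl

section Antisymmetry

variable {ι M : Type*} [Fintype ι] [AddCommGroup M] [IsAddTorsionFree M]

theorem sum_sum_eq_zero_of_antisymm (f : ι → ι → M) (hf : ∀ i j, f j i = -f i j) :
    ∑ i, ∑ j, f i j = 0 := by
  refine self_eq_neg.mp ?_
  calc ∑ i, ∑ j, f i j = ∑ j, ∑ i, f i j := sum_comm
    _ = ∑ j, ∑ i, -f j i := sum_congr rfl fun j _ => sum_congr rfl fun i _ => hf j i
    _ = -∑ i, ∑ j, f i j := by simp only [sum_neg_distrib]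

theorem sum4_eq_zero_of_antisymm (t : ι → ι → ι → ι → M)
    (ht : ∀ j i a r, t i j r a = -t j i a r) :
    ∑ j, ∑ i, ∑ a, ∑ r, t j i a r = 0 :=
  sum_sum_eq_zero_of_antisymm _ fun j i => by
    rw [sum_comm, ← sum_neg_distrib]
    exact sum_congr rfl fun a _ => by
      rw [← sum_neg_distrib]
      exact sum_congr rfl fun r _ => ht j i a r

theorem sum_sum_mul_eq_zero_of_symm_of_antisymm {R : Type*} [CommRing R] [IsAddTorsionFree R]
    (A B : ι → ι → R) (hA : ∀ i j, A j i = A i j) (hB : ∀ i j, B j i = -B i j) :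
    ∑ i, ∑ j, A i j * B i j = 0 :=
  sum_sum_eq_zero_of_antisymm _ fun i j => by rw [hA, hB, mul_neg]

end Antisymmetry

theorem sum_connection_cross_eq_zero {ι R : Type*} [Fintype ι] [CommRing R] [IsAddTorsionFree R]
    {G : Matrix ι ι R} (hG : G.IsSymm) {L K : ι → ι → ι → R}
    (hL : ∀ a b c, L a b c = L a c b) (hK : ∀ a b c, K a b c = -K a c b)
    (hKtr : ∀ b, ∑ a, K a b a = 0) :
    ∑ j, ∑ i, G j i * ∑ a, ∑ r, (L a r a * K r j i + K a r a * L r j i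
      - L a r i * K r j a - K a r i * L r j a) = 0 := by
  have hLK : ∑ j, ∑ i, G j i * ∑ a, ∑ r, L a r a * K r j i = 0 :=
    sum_sum_mul_eq_zero_of_symm_of_antisymm _ _ hG.apply fun i j => by
      simp only [← sum_neg_distrib, ← mul_neg, ← hK]
  have hKL : ∀ j i, ∑ a, ∑ r, K a r a * L r j i = 0 := fun j i => by
    rw [sum_comm]
    simp only [← sum_mul, hKtr, zero_mul, sum_const_zero]
  have hmixed : ∑ j, ∑ i, ∑ a, ∑ r, G j i * (L a r i * K r j a + K a r i * L r j a) = 0 :=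
    sum4_eq_zero_of_antisymm _ fun j i a r => by
      rw [hG.apply j i, hL r a j, hL a i r, hK a i r, hK r a j]
      ring
  calc ∑ j, ∑ i, G j i * ∑ a, ∑ r, (L a r a * K r j i + K a r a * L r j i
        - L a r i * K r j a - K a r i * L r j a)
      = ∑ j, ∑ i, G j i * ∑ a, ∑ r, L a r a * K r j i
        + ∑ j, ∑ i, G j i * ∑ a, ∑ r, K a r a * L r j i
        - ∑ j, ∑ i, ∑ a, ∑ r, G j i * (L a r i * K r j a + K a r i * L r j a) := by
        simp only [← sum_add_distrib, ← sum_sub_distrib, mul_sum, ← mul_add, ← mul_sub]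
        exact sum_congr rfl fun j _ => sum_congr rfl fun i _ => sum_congr rfl fun a _ =>
          sum_congr rfl fun r _ => by ring
    _ = 0 := by simp only [hLK, hKL, hmixed, mul_zero, sum_const_zero, add_zero, sub_zero]

structure IsTotallyAntisymm {ι R : Type*} [Neg R] (T : ι → ι → ι → R) : Prop where
  swap₁₂ : ∀ a b c, T a b c = -T b a c
  swap₂₃ : ∀ a b c, T a b c = -T a c b

namespace IsTotallyAntisymm

variable {ι R : Type*} [AddGroup R] {T : ι → ι → ι → R}

theorem cycle (hT : IsTotallyAntisymm T) (a b c : ι) : T a b c = T b c a := by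
  rw [hT.swap₁₂, hT.swap₂₃, neg_neg]

theorem swap₁₃ (hT : IsTotallyAntisymm T) (a b c : ι) : T a b c = -T c b a := by
  rw [hT.cycle, hT.swap₁₂]

end IsTotallyAntisymm

section PartialDerivative

variable {n : ℕ} {μ : Fin n} {x : Fin n → ℝ}

theorem pd_congr_of_eventuallyEq {f f' : (Fin n → ℝ) → ℝ} (h : f =ᶠ[𝓝 x] f') :
    pd μ f x = pd μ f' x := by
  rw [pd, pd, h.fderiv_eq]

theorem pd_const (c : ℝ) : pd μ (fun _ => c) x = 0 := by
  simp [pd]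

theorem pd_neg (f : (Fin n → ℝ) → ℝ) : pd μ (fun y => -f y) x = -pd μ f x := by
  simp [pd, fderiv_fun_neg]

theorem pd_add {f f' : (Fin n → ℝ) → ℝ} (hf : DifferentiableAt ℝ f x)
    (hf' : DifferentiableAt ℝ f' x) : pd μ (fun y => f y + f' y) x = pd μ f x + pd μ f' x := by
  simp [pd, fderiv_fun_add hf hf']

theorem pd_sum {ι : Type*} {s : Finset ι} {f : ι → (Fin n → ℝ) → ℝ}
    (hf : ∀ i ∈ s, DifferentiableAt ℝ (f i) x) :
    pd μ (fun y => ∑ i ∈ s, f i y) x = ∑ i ∈ s, pd μ (f i) x := by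
  simp [pd, fderiv_fun_sum hf]

theorem differentiableAt_pd {f : (Fin n → ℝ) → ℝ} (hf : ContDiffAt ℝ 2 f x) :
    DifferentiableAt ℝ (pd μ f) x :=
  ((hf.fderiv_right (m := 1) le_rfl).clm_apply contDiffAt_const).differentiableAt one_ne_zero

end PartialDerivative

section MatrixInverse

variable {𝕜 E ι : Type*} [NontriviallyNormedField 𝕜] [NormedAddCommGroup E] [NormedSpace 𝕜 E]
  [Fintype ι] [DecidableEq ι] {m : WithTop ℕ∞} {M : E → Matrix ι ι 𝕜} {x : E}

theorem contDiffAt_det (hM : ∀ i j, ContDiffAt 𝕜 m (fun y => M y i j) x) :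
    ContDiffAt 𝕜 m (fun y => (M y).det) x := by
  simp_rw [Matrix.det_apply']
  exact ContDiffAt.sum fun σ _ => contDiffAt_const.mul (contDiffAt_prod fun i _ => hM _ _)

theorem contDiffAt_inv_apply (hM : ∀ i j, ContDiffAt 𝕜 m (fun y => M y i j) x)
    (hdet : (M x).det ≠ 0) (a b : ι) : ContDiffAt 𝕜 m (fun y => (M y)⁻¹ a b) x := by
  have hcramer : (fun y => (M y)⁻¹ a b)
      = fun y => ((M y).det)⁻¹ * ((M y).updateRow b (Pi.single a 1)).det := by
    ext y
    rw [Matrix.inv_def, Matrix.smul_apply, Ring.inverse_eq_inv', Matrix.adjugate_apply,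
      smul_eq_mul]
  rw [hcramer]
  refine ((contDiffAt_det hM).inv hdet).mul (contDiffAt_det fun i j => ?_)
  by_cases hib : i = b
  · simpa [hib] using contDiffAt_const
  · simpa [Matrix.updateRow_ne hib] using hM i j

end MatrixInverse

noncomputable def contorsion {n : ℕ} (g : (Fin n → ℝ) → Matrix (Fin n) (Fin n) ℝ)
    (F : (Fin n → ℝ) → Fin n → Fin n → Fin n → ℝ) (y : Fin n → ℝ) (a μ ν : Fin n) : ℝ :=
  (1 / 2) * ∑ κ, (g y)⁻¹ a κ * F y κ μ ν

section Connection

variable {n : ℕ} {g : (Fin n → ℝ) → Matrix (Fin n) (Fin n) ℝ} {x : Fin n → ℝ}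

theorem differentiableAt_levi (hg : ∀ i j, ContDiffAt ℝ 2 (fun y => g y i j) x)
    (hdet : (g x).det ≠ 0) (η α β : Fin n) :
    DifferentiableAt ℝ (fun y => levi g y η α β) x := by
  unfold levi
  refine (DifferentiableAt.fun_sum fun μ _ => ?_).const_mul _
  exact ((contDiffAt_inv_apply hg hdet η μ).differentiableAt two_ne_zero).mul
    (((differentiableAt_pd (hg α μ)).add (differentiableAt_pd (hg μ β))).sub
      (differentiableAt_pd (hg α β)))

theorem differentiableAt_contorsion (hg : ∀ i j, ContDiffAt ℝ 1 (fun y => g y i j) x)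
    (hdet : (g x).det ≠ 0) {F : (Fin n → ℝ) → Fin n → Fin n → Fin n → ℝ}
    (hF : ∀ a b c, DifferentiableAt ℝ (fun y => F y a b c) x) (a μ ν : Fin n) :
    DifferentiableAt ℝ (fun y => contorsion g F y a μ ν) x := by
  unfold contorsion
  exact (DifferentiableAt.fun_sum fun κ _ =>
    ((contDiffAt_inv_apply hg hdet a κ).differentiableAt one_ne_zero).mul (hF κ μ ν)).const_mul _

theorem levi_comm (hg : ∀ᶠ y in 𝓝 x, (g y).IsSymm) (η α β : Fin n) :
    levi g x η α β = levi g x η β α := by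
  have hpd : ∀ μ i j, pd μ (fun y => g y i j) x = pd μ (fun y => g y j i) x := fun μ i j =>
    pd_congr_of_eventuallyEq (hg.mono fun y hy => hy.apply j i)
  unfold levi
  congr 1
  refine sum_congr rfl fun μ _ => ?_
  rw [hpd β α μ, hpd α μ β, hpd μ α β]
  ring

variable {Γ K : (Fin n → ℝ) → Fin n → Fin n → Fin n → ℝ}

theorem riem_add (hΓ : ∀ a b c, DifferentiableAt ℝ (fun y => Γ y a b c) x)
    (hK : ∀ a b c, DifferentiableAt ℝ (fun y => K y a b c) x) (a j k i : Fin n) :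
    riem (fun y a b c => Γ y a b c + K y a b c) x a j k i
      = riem Γ x a j k i + riem K x a j k i
        + ∑ r, (Γ x a r k * K x r j i + K x a r k * Γ x r j i
          - Γ x a r i * K x r j k - K x a r i * Γ x r j k) := by
  simp only [riem, pd_add (hΓ _ _ _) (hK _ _ _)]
  have hquad : ∑ r, ((Γ x a r k + K x a r k) * (Γ x r j i + K x r j i)
        - (Γ x a r i + K x a r i) * (Γ x r j k + K x r j k))
      = ∑ r, (Γ x a r k * Γ x r j i - Γ x a r i * Γ x r j k)
        + ∑ r, (K x a r k * K x r j i - K x a r i * K x r j k)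
        + ∑ r, (Γ x a r k * K x r j i + K x a r k * Γ x r j i
          - Γ x a r i * K x r j k - K x a r i * Γ x r j k) := by
    simp only [← sum_add_distrib]
    exact sum_congr rfl fun r _ => by ring
  rw [hquad]
  ring

theorem ricciScalar_add (hΓ : ∀ a b c, DifferentiableAt ℝ (fun y => Γ y a b c) x)
    (hK : ∀ a b c, DifferentiableAt ℝ (fun y => K y a b c) x) :
    ricciScalar g (fun y a b c => Γ y a b c + K y a b c) x
      = ricciScalar g Γ x + ricciScalar g K x
        + ∑ j, ∑ i, (g x)⁻¹ j i * ∑ a, ∑ r, (Γ x a r a * K x r j i + K x a r a * Γ x r j i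
          - Γ x a r i * K x r j a - K x a r i * Γ x r j a) := by
  simp only [ricciScalar, riem_add hΓ hK, sum_add_distrib, mul_add]

end Connection

section Contorsion

variable {n : ℕ} {g : (Fin n → ℝ) → Matrix (Fin n) (Fin n) ℝ}
  {F : (Fin n → ℝ) → Fin n → Fin n → Fin n → ℝ}

theorem contorsion_antisymm {y : Fin n → ℝ} (hF : IsTotallyAntisymm (F y)) (a μ ν : Fin n) :
    contorsion g F y a μ ν = -contorsion g F y a ν μ := by
  simp only [contorsion, ← mul_neg, ← sum_neg_distrib, ← hF.swap₂₃]

theorem sum_contorsion_trace {y : Fin n → ℝ} (hg : (g y).IsSymm) (hF : IsTotallyAntisymm (F y))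
    (μ : Fin n) : ∑ a, contorsion g F y a μ a = 0 := by
  simp only [contorsion, ← mul_sum]
  rw [sum_sum_eq_zero_of_antisymm _ fun a κ => ?_, mul_zero]
  rw [hg.inv.apply, hF.swap₁₃ κ, mul_neg, neg_neg]

theorem sum_contorsion_mul_contorsion {x : Fin n → ℝ} (hg : (g x).IsSymm)
    (hF : IsTotallyAntisymm (F x)) :
    ∑ j, ∑ i, (g x)⁻¹ j i * ∑ a, ∑ r, contorsion g F x a r i * contorsion g F x r j a
      = (1 / 4) * ∑ a, ∑ b, ∑ c, ∑ a', ∑ b', ∑ c',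
          (g x)⁻¹ a a' * (g x)⁻¹ b b' * (g x)⁻¹ c c' * F x a b c * F x a' b' c' := by
  simp only [contorsion, mul_sum, sum_mul]
  conv_rhs => rw [sum_six_reorder]
  refine sum_congr rfl fun j _ => sum_congr rfl fun i _ => sum_congr rfl fun a _ =>
    sum_congr rfl fun r _ => sum_congr rfl fun l _ => sum_congr rfl fun κ _ => ?_
  rw [hg.inv.apply i j, hg.inv.apply κ a, ← hF.cycle a l j]
  ring

variable {x : Fin n → ℝ}

theorem ricciScalar_contorsion (hg : ∀ i j, ContDiffAt ℝ 1 (fun y => g y i j) x)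
    (hdet : (g x).det ≠ 0) (hFdiff : ∀ a b c, DifferentiableAt ℝ (fun y => F y a b c) x)
    (hgsymm : ∀ᶠ y in 𝓝 x, (g y).IsSymm) (hF : ∀ᶠ y in 𝓝 x, IsTotallyAntisymm (F y)) :
    ricciScalar g (contorsion g F) x
      = -(1 / 4) * ∑ a, ∑ b, ∑ c, ∑ a', ∑ b', ∑ c',
          (g x)⁻¹ a a' * (g x)⁻¹ b b' * (g x)⁻¹ c c' * F x a b c * F x a' b' c' := by
  have hgx : (g x).IsSymm := hgsymm.self_of_nhds
  have hFx : IsTotallyAntisymm (F x) := hF.self_of_nhds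
  have hK := differentiableAt_contorsion hg hdet hFdiff
  have hpd_antisymm : ∀ i j, ∑ a, pd a (fun y => contorsion g F y a j i) x
      = -∑ a, pd a (fun y => contorsion g F y a i j) x := fun i j => by
    rw [← sum_neg_distrib]
    refine sum_congr rfl fun a _ => ?_
    rw [← pd_neg]
    exact pd_congr_of_eventuallyEq (hF.mono fun y hy => contorsion_antisymm hy a j i)
  have hpd_trace : ∀ j i, ∑ a, pd i (fun y => contorsion g F y a j a) x = 0 := fun j i => by
    rw [← pd_sum fun a _ => hK a j a, ← pd_const (μ := i) (x := x) 0]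
    exact pd_congr_of_eventuallyEq
      ((hgsymm.and hF).mono fun y hy => sum_contorsion_trace hy.1 hy.2 j)
  have hinner : ∀ j i, ∑ a, riem (contorsion g F) x a j a i
      = ∑ a, pd a (fun y => contorsion g F y a j i) x
        - ∑ a, ∑ r, contorsion g F x a r i * contorsion g F x r j a := fun j i => by
    have htrace : ∑ a, ∑ r, contorsion g F x a r a * contorsion g F x r j i = 0 := by
      rw [sum_comm]
      simp only [← sum_mul, sum_contorsion_trace hgx hFx, zero_mul, sum_const_zero]
    simp only [riem, sum_add_distrib, sum_sub_distrib, hpd_trace, htrace]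
    ring
  have hderiv : ∑ j, ∑ i, (g x)⁻¹ j i * ∑ a, pd a (fun y => contorsion g F y a j i) x = 0 :=
    sum_sum_mul_eq_zero_of_symm_of_antisymm _ _ hgx.inv.apply hpd_antisymm
  simp only [ricciScalar, hinner, mul_sub, sum_sub_distrib, hderiv,
    sum_contorsion_mul_contorsion hgx hFx]
  ring

end Contorsion

/-- for the connection `Γ^α_{μν} = Λ^α_{μν} + (1/2) g^{ακ} F_{κμν}` built
from a completely antisymmetric Cartan tensor `F`, the Ricci scalar satisfies
`F = R − (1/4) F_{abc} F^{abc}`. -/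
theorem ricci_scalar_decomposition_with_cartan
    (n : ℕ) (U : Set (Fin n → ℝ)) (hU : IsOpen U)
    (g : (Fin n → ℝ) → Matrix (Fin n) (Fin n) ℝ)
    (hg : ∀ μ ν : Fin n, ContDiffOn ℝ (⊤ : ℕ∞) (fun x => g x μ ν) U)
    (hgsym : ∀ x ∈ U, (g x)ᵀ = g x)
    (hginv : ∀ x ∈ U, IsUnit (g x).det)
    (F : (Fin n → ℝ) → Fin n → Fin n → Fin n → ℝ)
    (hF : ∀ α μ ν : Fin n, ContDiffOn ℝ (⊤ : ℕ∞) (fun x => F x α μ ν) U)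
    (hanti1 : ∀ x ∈ U, ∀ α μ ν : Fin n, F x α μ ν = -F x μ α ν)
    (hanti2 : ∀ x ∈ U, ∀ α μ ν : Fin n, F x α μ ν = -F x α ν μ) :
    ∀ x ∈ U,
      ricciScalar g
        (fun y α μ ν => levi g y α μ ν + (1 / 2) * ∑ κ, (g y)⁻¹ α κ * F y κ μ ν) x
      = ricciScalar g (levi g) x
        - (1 / 4) * ∑ a, ∑ b, ∑ c, ∑ a', ∑ b', ∑ c',
            (g x)⁻¹ a a' * (g x)⁻¹ b b' * (g x)⁻¹ c c' * F x a b c * F x a' b' c' := by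
  intro x hx
  have hnear : ∀ᶠ y in 𝓝 x, y ∈ U := hU.eventually_mem hx
  have hg2 : ∀ i j, ContDiffAt ℝ 2 (fun y => g y i j) x := fun i j =>
    ((hg i j).contDiffAt (hU.mem_nhds hx)).of_le (by norm_cast)
  have hg1 : ∀ i j, ContDiffAt ℝ 1 (fun y => g y i j) x := fun i j =>
    (hg2 i j).of_le one_le_two
  have hdet : (g x).det ≠ 0 := (hginv x hx).ne_zero
  have hFdiff : ∀ a b c, DifferentiableAt ℝ (fun y => F y a b c) x := fun a b c =>
    ((hF a b c).contDiffAt (hU.mem_nhds hx)).differentiableAt (by simp)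
  have hgsymm : ∀ᶠ y in 𝓝 x, (g y).IsSymm := hnear.mono hgsym
  have hFanti : ∀ᶠ y in 𝓝 x, IsTotallyAntisymm (F y) :=
    hnear.mono fun y hy => ⟨hanti1 y hy, hanti2 y hy⟩
  change ricciScalar g (fun y α μ ν => levi g y α μ ν + contorsion g F y α μ ν) x = _
  rw [ricciScalar_add (differentiableAt_levi hg2 hdet)
      (differentiableAt_contorsion hg1 hdet hFdiff),
    sum_connection_cross_eq_zero hgsymm.self_of_nhds.inv (levi_comm hgsymm)
      (contorsion_antisymm hFanti.self_of_nhds)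
      (sum_contorsion_trace hgsymm.self_of_nhds hFanti.self_of_nhds),
    ricciScalar_contorsion hg1 hdet hFdiff hgsymm hFanti]
  ring
end

section
/- (Gauge covariance of the gauge strength.) Let U ⊆ ℝᵐ be open, let A_μ : U → Matrix (Fin k) (Fin k) ℝ be smooth matrix-valued gauge potentials (μ ∈ Fin m), and let T : U → Matrix (Fin k) (Fin k) ℝ be smooth with T(x) invertible for every x ∈ U. Define the transformed potentials A'_μ = T (A_μ − T⁻¹ ∂_μ T) T⁻¹ and the gauge strengths F_{μν} = ∂_μ A_ν − ∂_ν A_μ + [A_μ, A_ν] and F'_{μν} = ∂_μ A'_ν − ∂_ν A'_μ + [A'_μ, A'_ν]. Then F'_{μν} = T F_{μν} T⁻¹ at every point of U and for all μ, ν. -/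
/-!
Write `S = T⁻¹`. Near a point of `U` we have `A'_ρ = T A_ρ S − (∂_ρ T) S`, and differentiating
`T S = 1` gives `∂_ρ S = −S (∂_ρ T) S`. Substituting these into `F'_{μν}` with the Leibniz rule,
every term containing a first derivative of `T` cancels, and the two second-derivative terms
`∂_μ ∂_ν T S` and `∂_ν ∂_μ T S` cancel by the symmetry of second derivatives; what remains is
`T F_{μν} S`.
-/

open Matrix

/-- The entrywise partial derivative of a matrix-valued function on `ℝᵐ` in the `μ`-th
coordinate direction. -/
noncomputable def pdM {m k : ℕ} (μ : Fin m)
    (X : (Fin m → ℝ) → Matrix (Fin k) (Fin k) ℝ) (x : Fin m → ℝ) :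
    Matrix (Fin k) (Fin k) ℝ :=
  Matrix.of fun i j => fderiv ℝ (fun y => X y i j) x (Pi.single μ 1)

/-- The gauge strength `F_{μν} = ∂_μ A_ν − ∂_ν A_μ + [A_μ, A_ν]` of matrix-valued gauge
potentials `A`. -/
noncomputable def gaugeStrength {m k : ℕ}
    (A : Fin m → (Fin m → ℝ) → Matrix (Fin k) (Fin k) ℝ)
    (μ ν : Fin m) (x : Fin m → ℝ) : Matrix (Fin k) (Fin k) ℝ :=
  pdM μ (A ν) x - pdM ν (A μ) x + (A μ x * A ν x - A ν x * A μ x)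

open Filter Topology

section EntrywiseDifferentiable

variable {𝕜 E : Type*} [NontriviallyNormedField 𝕜] [NormedAddCommGroup E] [NormedSpace 𝕜 E]
  {l n p : Type*} [Fintype n] {x : E}

theorem Matrix.differentiableAt_mul_apply {X : E → Matrix l n 𝕜} {Y : E → Matrix n p 𝕜}
    (hX : ∀ i j, DifferentiableAt 𝕜 (fun y => X y i j) x)
    (hY : ∀ i j, DifferentiableAt 𝕜 (fun y => Y y i j) x) (i : l) (j : p) :
    DifferentiableAt 𝕜 (fun y => (X y * Y y) i j) x := by
  simp only [mul_apply]
  exact DifferentiableAt.fun_sum fun r _ => (hX i r).mul (hY r j)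

variable [DecidableEq n] {X : E → Matrix n n 𝕜}

theorem Matrix.differentiableAt_det (hX : ∀ i j, DifferentiableAt 𝕜 (fun y => X y i j) x) :
    DifferentiableAt 𝕜 (fun y => (X y).det) x := by
  simp only [det_apply, Units.smul_def, zsmul_eq_mul]
  exact DifferentiableAt.fun_sum fun σ _ =>
    (differentiableAt_const _).mul
      (HasFDerivAt.finsetProd (g := fun i y => X y (σ i) i)
        fun i _ => (hX (σ i) i).hasFDerivAt).differentiableAt

theorem Matrix.differentiableAt_inv_apply
    (hX : ∀ i j, DifferentiableAt 𝕜 (fun y => X y i j) x) (hdet : (X x).det ≠ 0) (i j : n) :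
    DifferentiableAt 𝕜 (fun y => (X y)⁻¹ i j) x := by
  have cramer : (fun y => (X y)⁻¹ i j)
      = fun y => ((X y).det)⁻¹ * ((X y).updateRow j (Pi.single i 1)).det := by
    funext y
    rw [inv_def, smul_apply, adjugate_apply, Ring.inverse_eq_inv', smul_eq_mul]
  rw [cramer]
  refine ((differentiableAt_det hX).inv hdet).mul (differentiableAt_det fun a b => ?_)
  by_cases h : a = j <;> simp [updateRow_apply, h, hX a b]

end EntrywiseDifferentiable

section PartialDerivative

variable {m k : ℕ} {μ ν : Fin m} {x : Fin m → ℝ} {X Y : (Fin m → ℝ) → Matrix (Fin k) (Fin k) ℝ}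

theorem pdM_congr_of_eventuallyEq (h : X =ᶠ[𝓝 x] Y) : pdM μ X x = pdM μ Y x := by
  ext i j
  have h_entry : (fun y => X y i j) =ᶠ[𝓝 x] fun y => Y y i j :=
    h.mono fun y hy => congrFun (congrFun hy i) j
  simp only [pdM, of_apply, h_entry.fderiv_eq]

theorem pdM_const (c : Matrix (Fin k) (Fin k) ℝ) : pdM μ (fun _ => c) x = 0 := by
  ext i j
  simp [pdM]

theorem pdM_sub (hX : ∀ i j, DifferentiableAt ℝ (fun y => X y i j) x)
    (hY : ∀ i j, DifferentiableAt ℝ (fun y => Y y i j) x) :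
    pdM μ (fun y => X y - Y y) x = pdM μ X x - pdM μ Y x := by
  ext i j
  simp [pdM, fderiv_fun_sub (hX i j) (hY i j)]

theorem pdM_mul (hX : ∀ i j, DifferentiableAt ℝ (fun y => X y i j) x)
    (hY : ∀ i j, DifferentiableAt ℝ (fun y => Y y i j) x) :
    pdM μ (fun y => X y * Y y) x = pdM μ X x * Y x + X x * pdM μ Y x := by
  ext i j
  simp only [pdM, of_apply, Matrix.add_apply, mul_apply,
    fderiv_fun_sum fun r _ => (hX i r).fun_mul (hY r j), FunLike.coe_sum,
    Finset.sum_apply, ← Finset.sum_add_distrib]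
  refine Finset.sum_congr rfl fun r _ => ?_
  rw [fderiv_fun_mul (hX i r) (hY r j)]
  simp only [_root_.add_apply, _root_.smul_apply, smul_eq_mul]
  ring

theorem pdM_inv (hX : ∀ i j, DifferentiableAt ℝ (fun y => X y i j) x)
    (hdet : ∀ᶠ y in 𝓝 x, IsUnit (X y).det) :
    pdM μ (fun y => (X y)⁻¹) x = -((X x)⁻¹ * pdM μ X x * (X x)⁻¹) := by
  have hXinv := differentiableAt_inv_apply hX hdet.self_of_nhds.ne_zero
  have hLeibniz : pdM μ X x * (X x)⁻¹ + X x * pdM μ (fun y => (X y)⁻¹) x = 0 := by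
    rw [← pdM_mul hX hXinv,
      pdM_congr_of_eventuallyEq (hdet.mono fun y hy => mul_nonsing_inv (X y) hy), pdM_const]
  calc pdM μ (fun y => (X y)⁻¹) x
      = (X x)⁻¹ * (X x * pdM μ (fun y => (X y)⁻¹) x) := by
        rw [← Matrix.mul_assoc, nonsing_inv_mul _ hdet.self_of_nhds, Matrix.one_mul]
    _ = -((X x)⁻¹ * pdM μ X x * (X x)⁻¹) := by
        rw [eq_neg_of_add_eq_zero_right hLeibniz, mul_neg, Matrix.mul_assoc]

theorem differentiableAt_pdM_apply (hX : ∀ i j, ContDiffAt ℝ 2 (fun y => X y i j) x)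
    (i j : Fin k) : DifferentiableAt ℝ (fun y => pdM μ X y i j) x :=
  (((hX i j).fderiv_right (m := 1) one_add_one_eq_two.le).differentiableAt one_ne_zero).clm_apply
    (differentiableAt_const _)

theorem pdM_pdM_comm (hX : ∀ i j, ContDiffAt ℝ 2 (fun y => X y i j) x) :
    pdM μ (pdM ν X) x = pdM ν (pdM μ X) x := by
  ext i j
  have hdiff := ((hX i j).fderiv_right (m := 1) one_add_one_eq_two.le).differentiableAt one_ne_zero
  simp only [pdM, of_apply, fderiv_clm_apply hdiff (differentiableAt_const _)]
  simpa using (hX i j).isSymmSndFDerivAt (by simp) (Pi.single μ 1) (Pi.single ν 1)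

end PartialDerivative

/-- Here `ta`, `tb`, `tab` stand for `∂_μ T`, `∂_ν T`, `∂_μ ∂_ν T = ∂_ν ∂_μ T`, `s` for `T⁻¹`, and
`da`, `db` for `∂_ν A_μ`, `∂_μ A_ν`; the hypotheses on `da'`, `db'` are the Leibniz rule with
`∂ s = -s (∂ T) s`. -/
theorem sub_add_commutator_eq_conj {R : Type*} [Ring R] {t s a b da db ta tb tab a' b' da' db' : R}
    (hst : s * t = 1) (ha' : a' = t * a * s - ta * s) (hb' : b' = t * b * s - tb * s)
    (hda' : da' = (tb * a + t * da) * s + t * a * -(s * tb * s) - (tab * s + ta * -(s * tb * s)))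
    (hdb' : db' = (ta * b + t * db) * s + t * b * -(s * ta * s) - (tab * s + tb * -(s * ta * s))) :
    db' - da' + (a' * b' - b' * a') = t * (db - da + (a * b - b * a)) * s := by
  have hst' : ∀ r, s * (t * r) = r := fun r => by rw [← mul_assoc, hst, one_mul]
  subst ha' hb' hda' hdb'
  simp only [mul_sub, sub_mul, mul_add, add_mul, mul_neg, mul_assoc, hst']
  abel

noncomputable def gaugeTransform {m k : ℕ} (T : (Fin m → ℝ) → Matrix (Fin k) (Fin k) ℝ)
    (A : Fin m → (Fin m → ℝ) → Matrix (Fin k) (Fin k) ℝ) (ρ : Fin m) (y : Fin m → ℝ) :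
    Matrix (Fin k) (Fin k) ℝ :=
  T y * (A ρ y - (T y)⁻¹ * pdM ρ T y) * (T y)⁻¹

section GaugeTransform

variable {m k : ℕ} {x : Fin m → ℝ} {T : (Fin m → ℝ) → Matrix (Fin k) (Fin k) ℝ}
  {A : Fin m → (Fin m → ℝ) → Matrix (Fin k) (Fin k) ℝ}

theorem gaugeTransform_eq {y : Fin m → ℝ} (hdet : IsUnit (T y).det) (ρ : Fin m) :
    gaugeTransform T A ρ y = T y * A ρ y * (T y)⁻¹ - pdM ρ T y * (T y)⁻¹ := by
  rw [gaugeTransform, mul_sub, sub_mul, ← Matrix.mul_assoc (T y), mul_nonsing_inv _ hdet,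
    Matrix.one_mul]

theorem pdM_gaugeTransform (ρ σ : Fin m) (hA : ∀ i j, DifferentiableAt ℝ (fun y => A σ y i j) x)
    (hT : ∀ i j, ContDiffAt ℝ 2 (fun y => T y i j) x) (hdet : ∀ᶠ y in 𝓝 x, IsUnit (T y).det) :
    pdM ρ (gaugeTransform T A σ) x
      = (pdM ρ T x * A σ x + T x * pdM ρ (A σ) x) * (T x)⁻¹
          + T x * A σ x * -((T x)⁻¹ * pdM ρ T x * (T x)⁻¹)
        - (pdM ρ (pdM σ T) x * (T x)⁻¹ + pdM σ T x * -((T x)⁻¹ * pdM ρ T x * (T x)⁻¹)) := by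
  have hTd : ∀ i j, DifferentiableAt ℝ (fun y => T y i j) x :=
    fun i j => (hT i j).differentiableAt two_ne_zero
  have hSd := differentiableAt_inv_apply hTd hdet.self_of_nhds.ne_zero
  have hdTd := differentiableAt_pdM_apply (μ := σ) hT
  rw [pdM_congr_of_eventuallyEq (hdet.mono fun y hy => gaugeTransform_eq hy σ),
    pdM_sub (differentiableAt_mul_apply (differentiableAt_mul_apply hTd hA) hSd)
      (differentiableAt_mul_apply hdTd hSd),
    pdM_mul (differentiableAt_mul_apply hTd hA) hSd, pdM_mul hTd hA, pdM_mul hdTd hSd,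
    pdM_inv hTd hdet]

theorem gaugeStrength_gaugeTransform (hA : ∀ ρ i j, DifferentiableAt ℝ (fun y => A ρ y i j) x)
    (hT : ∀ i j, ContDiffAt ℝ 2 (fun y => T y i j) x) (hdet : ∀ᶠ y in 𝓝 x, IsUnit (T y).det)
    (μ ν : Fin m) :
    gaugeStrength (gaugeTransform T A) μ ν x = T x * gaugeStrength A μ ν x * (T x)⁻¹ :=
  sub_add_commutator_eq_conj (nonsing_inv_mul _ hdet.self_of_nhds)
    (gaugeTransform_eq hdet.self_of_nhds μ) (gaugeTransform_eq hdet.self_of_nhds ν)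
    (by rw [pdM_gaugeTransform ν μ (hA μ) hT hdet, pdM_pdM_comm hT])
    (pdM_gaugeTransform μ ν (hA ν) hT hdet)

end GaugeTransform

/-- gauge covariance of the gauge strength: if
`A'_μ = T (A_μ − T⁻¹ ∂_μ T) T⁻¹` with `T` smooth and pointwise invertible, then the
gauge strengths satisfy `F'_{μν} = T F_{μν} T⁻¹` on `U`. -/
theorem gauge_strength_covariant
    (m k : ℕ) (U : Set (Fin m → ℝ)) (hU : IsOpen U)
    (A : Fin m → (Fin m → ℝ) → Matrix (Fin k) (Fin k) ℝ)
    (hA : ∀ (μ : Fin m) (i j : Fin k), ContDiffOn ℝ (⊤ : ℕ∞) (fun x => A μ x i j) U)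
    (T : (Fin m → ℝ) → Matrix (Fin k) (Fin k) ℝ)
    (hT : ∀ i j : Fin k, ContDiffOn ℝ (⊤ : ℕ∞) (fun x => T x i j) U)
    (hTinv : ∀ x ∈ U, IsUnit (T x).det) :
    ∀ x ∈ U, ∀ μ ν : Fin m,
      gaugeStrength (fun ρ y => T y * (A ρ y - (T y)⁻¹ * pdM ρ T y) * (T y)⁻¹) μ ν x
        = T x * gaugeStrength A μ ν x * (T x)⁻¹ := by
  intro x hx μ ν
  have hUx : U ∈ 𝓝 x := hU.mem_nhds hx
  exact gaugeStrength_gaugeTransform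
    (fun ρ i j => ((hA ρ i j).contDiffAt hUx).differentiableAt (by simp))
    (fun i j => ((hT i j).contDiffAt hUx).of_le (by norm_cast))
    (eventually_of_mem hUx hTinv) μ ν
end
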